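/- arXiv:1812.11003 — 4 statements merged into one kernel-verified Lean document; each statement's English description precedes it below -/
import Mathlib

section
/- Every terminating oracle sequential algorithm induces a continuous functional: for all inputs u and oracles f in the class on which A terminates, there exists a finite list x_0,...,x_{m-1} of points such that any oracle g agreeing with f on these points satisfies Φ_A(u,f) = Φ_A(u,g). -/
/-!
A terminating run is a finite derivation, so it consults the oracle at only finitely many
points, and any oracle agreeing with `f` there admits the same derivation. The machine is
deterministic and halts at end states, so the end state a run reaches is unique; hence both
oracles produce the same output.
-/

section
variable {U V X Y R : Type*}
variable (QA : Set R) (E : Set (R × Option Y)) (ρ : U → R) (ξ : R → X)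
variable (πA : R × Option Y → V)
variable (step : R × Option Y → Option (R × Option Y))

/-- Reachability on oracle `f` in an OSA. -/
inductive Reaches (f : X → Y) : R × Option Y → R × Option Y → Prop
  | refl (s : R × Option Y) : Reaches f s s
  | oracle {r : R} {t : R × Option Y} : (r, (none : Option Y)) ∉ E → r ∈ QA →
      Reaches f (r, some (f (ξ r))) t → Reaches f (r, none) t
  | step {s s' t : R × Option Y} : s ∉ E → (s.2 = none → s.1 ∉ QA) → step s = some s' →
      Reaches f s' t → Reaches f s t

section
variable {QA E ξ step}

theorem Reaches.exists_forall_agree {f : X → Y} {s t : R × Option Y}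
    (h : Reaches QA E ξ step f s t) :
    ∃ l : List X, ∀ g : X → Y, (∀ x ∈ l, g x = f x) → Reaches QA E ξ step g s t := by
  induction h with
  | refl s => exact ⟨[], fun g _ => .refl s⟩
  | @oracle r _ hr_end hr_query _ ih =>
    obtain ⟨l, hl⟩ := ih
    refine ⟨ξ r :: l, fun g hg => ?_⟩
    have hg_query : g (ξ r) = f (ξ r) := hg _ List.mem_cons_self
    exact .oracle hr_end hr_query
      (hg_query ▸ hl g fun x hx => hg x (List.mem_cons_of_mem _ hx))
  | step hs_end hs_query hs_step _ ih =>
    obtain ⟨l, hl⟩ := ih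
    exact ⟨l, fun g hg => .step hs_end hs_query hs_step (hl g hg)⟩

-- Determinism: at a state outside `E`, the query states admit only the `oracle` rule and
-- all other states only the `step` rule.
theorem Reaches.eq_of_mem {f : X → Y} {s t t' : R × Option Y}
    (h : Reaches QA E ξ step f s t) (ht : t ∈ E)
    (h' : Reaches QA E ξ step f s t') (ht' : t' ∈ E) : t = t' := by
  induction h with
  | refl s =>
    cases h' with
    | refl => rfl
    | oracle hs_end _ _ => exact absurd ht hs_end
    | step hs_end _ _ _ => exact absurd ht hs_end
  | oracle hr_end hr_query _ ih =>
    cases h' with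
    | refl => exact absurd ht' hr_end
    | oracle _ _ h' => exact ih ht h'
    | step _ hr_not_query _ _ => exact absurd hr_query (hr_not_query rfl)
  | step hs_end hs_not_query hs_step _ ih =>
    cases h' with
    | refl => exact absurd ht' hs_end
    | oracle _ hs_query _ => exact absurd hs_query (hs_not_query rfl)
    | step _ _ hs_step' h' =>
      rw [hs_step] at hs_step'
      exact ih ht (Option.some_injective _ hs_step' ▸ h')

theorem Reaches.exists_mem_and_iff {f : X → Y} {s t : R × Option Y}
    (h : Reaches QA E ξ step f s t) (ht : t ∈ E) (P : R × Option Y → Prop) :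
    (∃ t' ∈ E, Reaches QA E ξ step f s t' ∧ P t') ↔ P t :=
  ⟨fun ⟨_, ht', h', hP⟩ => h.eq_of_mem ht h' ht' ▸ hP, fun hP => ⟨t, ht, h, hP⟩⟩

end

/-- Continuity: a terminating OSA induces a continuous functional.  For every input `u` and
oracle `f` in the class `F` on which the algorithm terminates, there is a finite list of query
points such that any oracle `g` agreeing with `f` on those points yields the same output
`Φ_A(u,g) = Φ_A(u,f)`. -/
theorem continuity (F : Set (X → Y))
    (hterm : ∀ (u : U), ∀ f ∈ F, ∃ t ∈ E, Reaches QA E ξ step f (ρ u, none) t) :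
    ∀ (u : U), ∀ f ∈ F, ∃ l : List X, ∀ g : X → Y, (∀ x ∈ l, g x = f x) →
      ∀ v : V, (∃ t ∈ E, Reaches QA E ξ step f (ρ u, none) t ∧ πA t = v)
        ↔ (∃ t ∈ E, Reaches QA E ξ step g (ρ u, none) t ∧ πA t = v) := by
  intro u f hf
  obtain ⟨t, ht, hf_reach⟩ := hterm u f hf
  obtain ⟨l, hl⟩ := hf_reach.exists_forall_agree
  refine ⟨l, fun g hg v => ?_⟩
  exact (hf_reach.exists_mem_and_iff ht (πA · = v)).trans
    ((hl g hg).exists_mem_and_iff ht (πA · = v)).symm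

end
end

section
/- Non-termination yields an unbounded function: if A terminates on all oracles but A_ω fails to terminate on oracles φ_1 : X^ℕ → ℕ and φ_2 : X^ℕ → Y, then there exists γ : ℕ → X such that for all N ∈ ℕ, N ≤ φ_1(γ̄(N)::0^ω), where γ̄(N) is the initial segment of γ of length N. -/
section
variable {R X Y : Type*}
variable (ξA : R → X) (ρA : List X → R) (QA : Set R)
variable (EA : Set (R × Option Y))
variable (stepA : R × Option Y → Option (R × Option Y)) (x0 : X)

/-- States of the dependent-choice algorithm `A_ω`: a register `(σ, a) ∈ R* × X*` together
with the two answer tapes (for the oracles `φ₁ : X^ℕ → ℕ` and `φ₂ : X^ℕ → Y`). -/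
abbrev StateW (R X Y : Type*) : Type _ := (List R × List X) × Option ℕ × Option Y

/-- The query map of `A_ω`: `ξ_ω(σ, a) := ξ*(σ) :: a :: 0,0,…`. -/
def xiW (σ : List R) (a : List X) : ℕ → X := fun n => ((σ.map ξA) ++ a).getD n x0

/-- Non-oracle transitions of `A_ω` (rules (a), (b), (c-i), (c-ii), (c-iii)). -/
inductive StepW : StateW R X Y → StateW R X Y → Prop
  | ruleA (σ : List R) (n : ℕ) :
      StepW ((σ, []), some n, none) ((σ ++ [ρA (σ.map ξA)], []), none, none)
  | ruleB (σ : List R) (r : R) (a : List X) (n : ℕ) (y : Y) :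
      (r, some y) ∈ EA →
      StepW ((σ ++ [r], a), some n, some y) ((σ, ξA r :: a), some n, some y)
  | ruleCi (σ : List R) (r r' : R) :
      stepA (r, none) = some (r', none) →
      StepW ((σ ++ [r], []), none, none) ((σ ++ [r'], []), none, none)
  | ruleCii (σ : List R) (r r' : R) (a : List X) (n : ℕ) (y : Y) :
      stepA (r, some y) = some (r', none) →
      StepW ((σ ++ [r], a), some n, some y) ((σ ++ [r'], []), none, none)
  | ruleCiii (σ : List R) (r r' : R) (a : List X) (n : ℕ) (y : Y) :
      stepA (r, some y) = some (r', some y) →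
      StepW ((σ ++ [r], a), some n, some y) ((σ ++ [r'], a), some n, some y)

/-- First-oracle query states `Q₁` of `A_ω`. -/
def Q1W (s : StateW R X Y) : Prop :=
  ∃ (σ : List R) (r : R), s = ((σ ++ [r], []), none, none) ∧ r ∈ QA

/-- Second-oracle query states `Q₂` of `A_ω`. -/
def Q2W (s : StateW R X Y) : Prop :=
  ∃ (σ : List R) (n : ℕ), s = ((σ, []), some n, none) ∧ n < σ.length

/-- End states of `A_ω`. -/
def EW (s : StateW R X Y) : Prop :=
  ∃ (a : List X) (n : ℕ) (y : Y), s = (([], a), some n, some y)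

/-- One step of `A_ω` on oracles `φ₁, φ₂`: oracle transitions at the query states,
otherwise a transition via `StepW`. -/
inductive OStepW (φ1 : (ℕ → X) → ℕ) (φ2 : (ℕ → X) → Y) :
    StateW R X Y → StateW R X Y → Prop
  | q1 (σ : List R) (r : R) : r ∈ QA →
      OStepW φ1 φ2 ((σ ++ [r], []), none, none)
        ((σ ++ [r], []), some (φ1 (xiW ξA x0 (σ ++ [r]) [])), none)
  | q2 (σ : List R) (n : ℕ) : n < σ.length →
      OStepW φ1 φ2 ((σ, []), some n, none)
        ((σ, []), some n, some (φ2 (xiW ξA x0 σ [])))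
  | tr (s t : StateW R X Y) : ¬ Q1W QA s → ¬ Q2W s →
      StepW ξA ρA EA stepA s t → OStepW φ1 φ2 s t

/-- Reachability in `A_ω` on oracles `φ₁, φ₂` (no end state before the last). -/
inductive ReachesW (φ1 : (ℕ → X) → ℕ) (φ2 : (ℕ → X) → Y) :
    StateW R X Y → StateW R X Y → Prop
  | refl (s : StateW R X Y) : ReachesW φ1 φ2 s s
  | head {s t u : StateW R X Y} : ¬ EW s →
      OStepW ξA ρA QA EA stepA x0 φ1 φ2 s t → ReachesW φ1 φ2 t u → ReachesW φ1 φ2 s u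

/-- Reachability on oracle `f` for the original algorithm `A` of sort `X*, X, Y`. -/
inductive ReachesA (f : X → Y) : R × Option Y → R × Option Y → Prop
  | refl (s : R × Option Y) : ReachesA f s s
  | oracle {r : R} {t : R × Option Y} : (r, (none : Option Y)) ∉ EA → r ∈ QA →
      ReachesA f (r, some (f (ξA r))) t → ReachesA f (r, none) t
  | step {s s' t : R × Option Y} : s ∉ EA → (s.2 = none → s.1 ∉ QA) →
      stepA s = some s' → ReachesA f s' t → ReachesA f s t


/-! Above a fixed bottom part `σ₀` of its stack, `A_ω` only sees the query values `ξ*(σ₀)`, so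
it can be run over a base `v : X*`. Call `v` good if the run over `v` never returns to its base
and `|v| ≤ φ₁(v :: 0^ω)`; the empty base is good because `A_ω` does not terminate. A good `w` has
a good extension `w ++ [x]`: otherwise run `A` on input `w` with the oracle answering `x` by what
the run over `w ++ [x]` returns (or by `φ₂` when `φ₁(w ++ [x] :: 0^ω) ≤ |w|`, as `A_ω` does).
The run over `w` then follows this terminating run of `A` in its bottom register and returns to
its base when `A` ends, contradicting goodness. Dependent choice along good extensions gives `γ`.
-/

theorem exists_seq_of_forall_exists_append {α : Type*} (P : List α → Prop) (h₀ : P [])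
    (hext : ∀ l, P l → ∃ a, P (l ++ [a])) :
    ∃ γ : ℕ → α, ∀ N, P ((List.range N).map γ) := by
  let next (l : {l // P l}) : {l // P l} :=
    ⟨l.1 ++ [(hext l.1 l.2).choose], (hext l.1 l.2).choose_spec⟩
  let c : ℕ → {l // P l} := fun n => next^[n] ⟨[], h₀⟩
  refine ⟨fun n => (hext (c n).1 (c n).2).choose, fun N => ?_⟩
  suffices (c N).1 = (List.range N).map fun n => (hext (c n).1 (c n).2).choose from
    this ▸ (c N).2
  induction N with
  | zero => rfl
  | succ N ih =>
    rw [List.range_succ, List.map_append, ← ih]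
    exact congrArg Subtype.val (Function.iterate_succ_apply' next N _)

/-- `u :: 0^ω`, with `x0` as `0`. -/
def padSeq (u : List X) : ℕ → X := fun n => u.getD n x0

section Relativized

variable (φ1 : (ℕ → X) → ℕ) (φ2 : (ℕ → X) → Y)

/-- `A_ω` run above a base of query values `v`: a state with stack `σ` stands for the state of
`A_ω` with stack `σ₀ ++ σ` for any `σ₀` with `ξ*(σ₀) = v`. -/
inductive StepOver (v : List X) : StateW R X Y → StateW R X Y → Prop
  | query1 (σ : List R) (r : R) : r ∈ QA →
      StepOver v ((σ ++ [r], []), none, none)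
        ((σ ++ [r], []), some (φ1 (padSeq x0 (v ++ (σ ++ [r]).map ξA))), none)
  | query2 (σ : List R) (n : ℕ) : n < v.length + σ.length →
      StepOver v ((σ, []), some n, none)
        ((σ, []), some n, some (φ2 (padSeq x0 (v ++ σ.map ξA))))
  | push (σ : List R) (n : ℕ) : v.length + σ.length ≤ n →
      StepOver v ((σ, []), some n, none) ((σ ++ [ρA (v ++ σ.map ξA)], []), none, none)
  | pop (σ : List R) (r : R) (a : List X) (n : ℕ) (y : Y) : (r, some y) ∈ EA →
      StepOver v ((σ ++ [r], a), some n, some y) ((σ, ξA r :: a), some n, some y)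
  | run (σ : List R) (r r' : R) : r ∉ QA → stepA (r, none) = some (r', none) →
      StepOver v ((σ ++ [r], []), none, none) ((σ ++ [r'], []), none, none)
  | resume (σ : List R) (r r' : R) (a : List X) (n : ℕ) (y : Y) :
      stepA (r, some y) = some (r', none) →
      StepOver v ((σ ++ [r], a), some n, some y) ((σ ++ [r'], []), none, none)
  | keep (σ : List R) (r r' : R) (a : List X) (n : ℕ) (y : Y) :
      stepA (r, some y) = some (r', some y) →
      StepOver v ((σ ++ [r], a), some n, some y) ((σ ++ [r'], a), some n, some y)

def ReachableOver (v : List X) (s : StateW R X Y) : Prop :=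
  Relation.ReflTransGen (StepOver ξA ρA QA EA stepA x0 φ1 φ2 v) (([ρA v], []), none, none) s

def DeliversOver (v : List X) (y : Y) : Prop :=
  ∃ (a : List X) (n : ℕ),
    ReachableOver ξA ρA QA EA stepA x0 φ1 φ2 v (([], a), some n, some y)

def liftState (r : R) (s : StateW R X Y) : StateW R X Y := ((r :: s.1.1, s.1.2), s.2)

open Classical in
/-- The answer the run over `w` gives to a query `x` of its bottom register. -/
noncomputable def baseOracle (w : List X) (x : X) : Y :=
  if h : w.length < φ1 (padSeq x0 (w ++ [x])) ∧
      ∃ y, DeliversOver ξA ρA QA EA stepA x0 φ1 φ2 (w ++ [x]) y then h.2.choose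
  else φ2 (padSeq x0 (w ++ [x]))

def ReachesBottom (w : List X) : R × Option Y → Prop
  | (r, none) => ReachableOver ξA ρA QA EA stepA x0 φ1 φ2 w (([r], []), none, none)
  | (r, some y) => ∃ (a : List X) (n : ℕ),
      ReachableOver ξA ρA QA EA stepA x0 φ1 φ2 w (([r], a), some n, some y)

variable {ξA ρA QA EA stepA x0 φ1 φ2}

theorem StepOver.lift {v : List X} {r : R} {s t : StateW R X Y}
    (h : StepOver ξA ρA QA EA stepA x0 φ1 φ2 (v ++ [ξA r]) s t) :
    StepOver ξA ρA QA EA stepA x0 φ1 φ2 v (liftState r s) (liftState r t) := by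
  have hv (σ : List R) : v ++ [ξA r] ++ σ.map ξA = v ++ (r :: σ).map ξA := by simp
  cases h with
  | query1 σ r' hq => simpa [liftState, hv] using StepOver.query1 (r :: σ) r' hq
  | query2 σ n hn =>
    simpa [liftState, hv] using StepOver.query2 (r :: σ) n (by simp at hn ⊢; omega)
  | push σ n hn =>
    simpa [liftState, hv] using StepOver.push (r :: σ) n (by simp at hn ⊢; omega)
  | pop σ r' a n y he => exact StepOver.pop (r :: σ) r' a n y he
  | run σ r' r'' hq hs => exact StepOver.run (r :: σ) r' r'' hq hs
  | resume σ r' r'' a n y hs => exact StepOver.resume (r :: σ) r' r'' a n y hs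
  | keep σ r' r'' a n y hs => exact StepOver.keep (r :: σ) r' r'' a n y hs

theorem StepOver.not_EW {v : List X} {s t : StateW R X Y}
    (h : StepOver ξA ρA QA EA stepA x0 φ1 φ2 v s t) : ¬ EW s := by
  rintro ⟨a, n, y, rfl⟩
  generalize hσ : ([] : List R) = σ at h
  cases h <;> simp_all

theorem StepOver.toOStepW {s t : StateW R X Y}
    (h : StepOver ξA ρA QA EA stepA x0 φ1 φ2 [] s t) :
    OStepW ξA ρA QA EA stepA x0 φ1 φ2 s t := by
  have hpad (σ : List R) : padSeq x0 ([] ++ σ.map ξA) = xiW ξA x0 σ [] := by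
    funext n; simp [padSeq, xiW]
  cases h with
  | query1 σ r hq => rw [hpad]; exact OStepW.q1 σ r hq
  | query2 σ n hn => rw [hpad]; exact OStepW.q2 σ n (by simpa using hn)
  | push σ n hn => exact .tr _ _ (by simp [Q1W]) (by simpa [Q2W] using hn) (.ruleA σ n)
  | pop σ r a n y he => exact .tr _ _ (by simp [Q1W]) (by simp [Q2W]) (.ruleB σ r a n y he)
  | run σ r r' hq hs =>
    exact .tr _ _ (by simpa [Q1W] using hq) (by simp [Q2W]) (.ruleCi σ r r' hs)
  | resume σ r r' a n y hs =>
    exact .tr _ _ (by simp [Q1W]) (by simp [Q2W]) (.ruleCii σ r r' a n y hs)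
  | keep σ r r' a n y hs =>
    exact .tr _ _ (by simp [Q1W]) (by simp [Q2W]) (.ruleCiii σ r r' a n y hs)

theorem ReachableOver.lift {v : List X} {r : R} {s : StateW R X Y}
    (h : ReachableOver ξA ρA QA EA stepA x0 φ1 φ2 (v ++ [ξA r]) s) :
    Relation.ReflTransGen (StepOver ξA ρA QA EA stepA x0 φ1 φ2 v)
      (([r, ρA (v ++ [ξA r])], []), none, none) (liftState r s) :=
  Relation.ReflTransGen.lift (liftState r) (fun _ _ => StepOver.lift) _ _ h

theorem reachesW_of_reflTransGen_stepOver {s t : StateW R X Y}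
    (h : Relation.ReflTransGen (StepOver ξA ρA QA EA stepA x0 φ1 φ2 []) s t) :
    ReachesW ξA ρA QA EA stepA x0 φ1 φ2 s t := by
  induction h using Relation.ReflTransGen.head_induction_on with
  | refl => exact .refl t
  | head hst _ ih => exact .head hst.not_EW hst.toOStepW ih

theorem not_deliversOver_nil
    (hnonterm : ¬ ∃ t : StateW R X Y, EW t ∧
      ReachesW ξA ρA QA EA stepA x0 φ1 φ2 (([ρA []], []), none, none) t) :
    ¬ ∃ y, DeliversOver ξA ρA QA EA stepA x0 φ1 φ2 [] y := by
  rintro ⟨y, a, n, h⟩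
  exact hnonterm ⟨_, ⟨a, n, y, rfl⟩, reachesW_of_reflTransGen_stepOver h⟩

theorem deliversOver_of_reachesBottom (hE : ∀ r : R, (r, (none : Option Y)) ∉ EA)
    {w : List X} {e : R × Option Y} (he : e ∈ EA)
    (h : ReachesBottom ξA ρA QA EA stepA x0 φ1 φ2 w e) :
    ∃ y, DeliversOver ξA ρA QA EA stepA x0 φ1 φ2 w y := by
  obtain ⟨r, _ | y⟩ := e
  · exact absurd he (hE r)
  · obtain ⟨a, n, h⟩ := h
    exact ⟨y, ξA r :: a, n, h.tail (StepOver.pop [] r a n y he)⟩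

theorem reachesBottom_of_step
    (hstep : ∀ (r r' : R) (o : Option Y) (y : Y),
      stepA (r, o) = some (r', some y) → o = some y ∧ ξA r = ξA r')
    {w : List X} {p p' : R × Option Y} (hq : p.2 = none → p.1 ∉ QA)
    (hs : stepA p = some p') (h : ReachesBottom ξA ρA QA EA stepA x0 φ1 φ2 w p) :
    ReachesBottom ξA ρA QA EA stepA x0 φ1 φ2 w p' := by
  obtain ⟨r, _ | y⟩ := p <;> obtain ⟨r', _ | y'⟩ := p'
  · exact h.tail (StepOver.run [] r r' (hq rfl) hs)
  · exact nomatch (hstep _ _ _ _ hs).1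
  · obtain ⟨a, n, h⟩ := h
    exact h.tail (StepOver.resume [] r r' a n y hs)
  · obtain ⟨a, n, h⟩ := h
    obtain rfl : y = y' := Option.some.inj (hstep _ _ _ _ hs).1
    exact ⟨a, n, h.tail (StepOver.keep [] r r' a n y hs)⟩

theorem reachesBottom_of_query {w : List X}
    (hext : ∀ x, w.length < φ1 (padSeq x0 (w ++ [x])) →
      ∃ y, DeliversOver ξA ρA QA EA stepA x0 φ1 φ2 (w ++ [x]) y)
    {r : R} (hq : r ∈ QA) (h : ReachesBottom ξA ρA QA EA stepA x0 φ1 φ2 w (r, none)) :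
    ReachesBottom ξA ρA QA EA stepA x0 φ1 φ2 w
      (r, some (baseOracle ξA ρA QA EA stepA x0 φ1 φ2 w (ξA r))) := by
  have h₁ := h.tail (StepOver.query1 [] r hq)
  simp only [List.nil_append, List.map_cons, List.map_nil] at h₁
  unfold baseOracle
  split_ifs with hd
  · obtain ⟨a, n, hy⟩ := hd.2.choose_spec
    exact ⟨a, n, (h₁.tail (StepOver.push [r] _ (by simpa using hd.1))).trans hy.lift⟩
  · have hle : φ1 (padSeq x0 (w ++ [ξA r])) ≤ w.length := by
      by_contra! hlt
      exact hd ⟨hlt, hext _ hlt⟩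
    exact ⟨[], _, h₁.tail (StepOver.query2 [r] _ (by simp; omega))⟩

theorem deliversOver_of_reachesA (hE : ∀ r : R, (r, (none : Option Y)) ∉ EA)
    (hstep : ∀ (r r' : R) (o : Option Y) (y : Y),
      stepA (r, o) = some (r', some y) → o = some y ∧ ξA r = ξA r')
    {w : List X} (hext : ∀ x, w.length < φ1 (padSeq x0 (w ++ [x])) →
      ∃ y, DeliversOver ξA ρA QA EA stepA x0 φ1 φ2 (w ++ [x]) y)
    {p e : R × Option Y}
    (h : ReachesA ξA QA EA stepA (baseOracle ξA ρA QA EA stepA x0 φ1 φ2 w) p e) (he : e ∈ EA)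
    (hp : ReachesBottom ξA ρA QA EA stepA x0 φ1 φ2 w p) :
    ∃ y, DeliversOver ξA ρA QA EA stepA x0 φ1 φ2 w y := by
  induction h with
  | refl => exact deliversOver_of_reachesBottom hE he hp
  | oracle _ hq _ ih => exact ih he (reachesBottom_of_query hext hq hp)
  | step _ hq hs _ ih => exact ih he (reachesBottom_of_step hstep hq hs hp)

theorem exists_extension_not_deliversOver (hE : ∀ r : R, (r, (none : Option Y)) ∉ EA)
    (hstep : ∀ (r r' : R) (o : Option Y) (y : Y),
      stepA (r, o) = some (r', some y) → o = some y ∧ ξA r = ξA r')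
    (hterm : ∀ (f : X → Y) (u : List X), ∃ (r : R) (y : Y),
      (r, some y) ∈ EA ∧ ReachesA ξA QA EA stepA f (ρA u, none) (r, some y))
    {w : List X} (hw : ¬ ∃ y, DeliversOver ξA ρA QA EA stepA x0 φ1 φ2 w y) :
    ∃ x, w.length < φ1 (padSeq x0 (w ++ [x])) ∧
      ¬ ∃ y, DeliversOver ξA ρA QA EA stepA x0 φ1 φ2 (w ++ [x]) y := by
  by_contra! hext
  obtain ⟨r, y, he, h⟩ := hterm (baseOracle ξA ρA QA EA stepA x0 φ1 φ2 w) w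
  exact hw (deliversOver_of_reachesA hE hstep hext h he .refl)

end Relativized

theorem padSeq_map_range (γ : ℕ → X) (N : ℕ) :
    padSeq x0 ((List.range N).map γ) = fun k => if k < N then γ k else x0 := by
  funext k
  split_ifs with hk <;> simp [padSeq, hk]

/-- Non-termination yields an unbounded function: if `A` (an approximation algorithm of sort
`X*, X, Y`) terminates on all oracles but `A_ω` fails to terminate on the oracles
`φ₁ : X^ℕ → ℕ` and `φ₂ : X^ℕ → Y`, then there is `γ : ℕ → X` with
`N ≤ φ₁ (γ̄(N) :: 0^ω)` for all `N`. -/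
theorem nontermination_unbounded
    (hE : ∀ r : R, (r, (none : Option Y)) ∉ EA)
    (hstep : ∀ (r r' : R) (o : Option Y) (y : Y),
      stepA (r, o) = some (r', some y) → o = some y ∧ ξA r = ξA r')
    (hterm : ∀ (f : X → Y) (u : List X), ∃ (r : R) (y : Y),
      (r, some y) ∈ EA ∧ ReachesA ξA QA EA stepA f (ρA u, none) (r, some y))
    (φ1 : (ℕ → X) → ℕ) (φ2 : (ℕ → X) → Y)
    (hnonterm : ¬ ∃ t : StateW R X Y, EW t ∧
      ReachesW ξA ρA QA EA stepA x0 φ1 φ2 (([ρA []], []), none, none) t) :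
    ∃ γ : ℕ → X, ∀ N : ℕ, N ≤ φ1 (fun k => if k < N then γ k else x0) := by
  let Good (w : List X) : Prop :=
    (¬ ∃ y, DeliversOver ξA ρA QA EA stepA x0 φ1 φ2 w y) ∧ w.length ≤ φ1 (padSeq x0 w)
  have hnil : Good [] := ⟨not_deliversOver_nil hnonterm, Nat.zero_le _⟩
  have hext (w : List X) (hw : Good w) : ∃ x, Good (w ++ [x]) := by
    obtain ⟨x, hlt, hx⟩ := exists_extension_not_deliversOver hE hstep hterm hw.1
    exact ⟨x, hx, by simpa using hlt⟩
  obtain ⟨γ, hγ⟩ := exists_seq_of_forall_exists_append Good hnil hext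
  exact ⟨γ, fun N => by simpa [padSeq_map_range] using (hγ N).2⟩

end
end

section
/- Realizer correctness for the infinite tape problem: fix b : ℕ → {0,1} and N ∈ ℕ. Define P([u_0,...,u_{n-1}], x, y) :≡ u_{n-1} < x ∧ ((b_x = 1 ∧ x ≤ y) → b_y = 1) (omitting the first conjunct when the list is empty). Define f_1(α) := least n < N with ¬(α_{n-1} < α_n) ∨ b_{α_n} = 1, else N−1; f_2(α) := if b_{α_n} = 1 then the least y with α_n ≤ y ≤ α_n + N − 1 and b_y = 0, else α_n + N − 1 (where n := f_1(α)); and g(α) := [α_n, α_n+1, ..., α_n+N−1] if b_{α_n} = 1, else [α_0,...,α_{N−1}]. Then for every α : ℕ → ℕ, P(ᾱ(f_1(α)), α_{f_1(α)}, f_2(α)) implies Q(g(α)), where Q(v) :≡ |v| = N ∧ ∀i < N−1 (v_i < v_{i+1} ∧ b_{v_i} = b_{v_{i+1}}). -/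
attribute [local instance] Classical.propDecidable

section
variable (b : ℕ → Bool) (N : ℕ)

/-- `P([u_0,…,u_{n-1}], x, y) :≡ u_{n-1} < x ∧ ((b x = 1 ∧ x ≤ y) → b y = 1)`,
where the first conjunct is omitted when the list is empty (`true` stands for the bit `1`). -/
def Pt (u : List ℕ) (x y : ℕ) : Prop :=
  (∀ l ∈ u.getLast?, l < x) ∧ ((b x = true ∧ x ≤ y) → b y = true)

/-- The condition searched for by `f₁` at position `n`: `¬(α_{n-1} < α_n) ∨ b_{α_n} = 1`
(the first disjunct being omitted at `n = 0`). -/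
def condT (α : ℕ → ℕ) (n : ℕ) : Prop :=
  (0 < n ∧ ¬ α (n - 1) < α n) ∨ b (α n) = true

/-- `f₁(α) :=` least `n < N` with `¬(α_{n-1} < α_n) ∨ b_{α_n} = 1`, else `N − 1`. -/
noncomputable def f1 (α : ℕ → ℕ) : ℕ :=
  if h : ∃ n : ℕ, n < N ∧ condT b α n then Nat.find h else N - 1

/-- `f₂(α) :=` if `b_{α_n} = 1` then the least `y` with `α_n ≤ y ≤ α_n + N − 1` and `b_y = 0`
(else `α_n + N − 1` if there is none), else `α_n + N − 1`, where `n := f₁(α)`. -/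
noncomputable def f2 (α : ℕ → ℕ) : ℕ :=
  let n := f1 b N α
  if b (α n) = true then
    (if h : ∃ y : ℕ, α n ≤ y ∧ y ≤ α n + N - 1 ∧ b y = false then Nat.find h
     else α n + N - 1)
  else α n + N - 1

/-- `g(α) := [α_n, α_n + 1, …, α_n + N − 1]` if `b_{α_n} = 1`, else `[α_0, …, α_{N-1}]`,
where `n := f₁(α)`. -/
noncomputable def gT (α : ℕ → ℕ) : List ℕ :=
  let n := f1 b N α
  if b (α n) = true then List.ofFn (fun i : Fin N => α n + (i : ℕ))
  else List.ofFn (fun i : Fin N => α (i : ℕ))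

/-- `Q(v) :≡ |v| = N ∧ ∀ i < N − 1, v_i < v_{i+1} ∧ b_{v_i} = b_{v_{i+1}}`. -/
def Qt (v : List ℕ) : Prop :=
  v.length = N ∧ ∀ i : ℕ, i + 1 < N → v.getD i 0 < v.getD (i+1) 0 ∧
    b (v.getD i 0) = b (v.getD (i+1) 0)

/-- Realizer correctness for the infinite tape problem: for every `α : ℕ → ℕ`,
`P (ᾱ(f₁ α)) (α (f₁ α)) (f₂ α)` implies `Q (g α)`. -/
theorem tape_realizer_correct :
    ∀ α : ℕ → ℕ,
      Pt b (List.ofFn fun i : Fin (f1 b N α) => α i) (α (f1 b N α)) (f2 b N α) →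
      Qt b N (gT b N α) := by
  intro α hP
  obtain ⟨hP1, hP2⟩ := hP
  by_cases hb : b (α (f1 b N α)) = true
  · -- the window case
    have hno : ∀ y : ℕ, α (f1 b N α) ≤ y → y ≤ α (f1 b N α) + N - 1 → b y = true := by
      by_contra hcon
      push_neg at hcon
      have h : ∃ y : ℕ, α (f1 b N α) ≤ y ∧ y ≤ α (f1 b N α) + N - 1 ∧ b y = false := by
        obtain ⟨y, h1, h2, h3⟩ := hcon
        exact ⟨y, h1, h2, by simpa using h3⟩
      have hf2 : f2 b N α = Nat.find h := by
        simp only [f2, hb, if_true, dif_pos h]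
      obtain ⟨h1, h2, h3⟩ := Nat.find_spec h
      have := hP2 ⟨hb, by rw [hf2]; exact h1⟩
      rw [hf2, h3] at this
      exact absurd this (by simp)
    constructor
    · simp [gT, hb]
    · intro i hi
      have hgetD : ∀ j, j < N → (gT b N α).getD j 0 = α (f1 b N α) + j := by
        intro j hj
        simp [gT, hb, List.getD, List.getElem?_ofFn, hj]
      rw [hgetD i (by omega), hgetD (i+1) hi]
      refine ⟨by omega, ?_⟩
      rw [hno _ (by omega) (by omega), hno _ (by omega) (by omega)]
  · -- b (α n) = false
    by_cases h : ∃ m : ℕ, m < N ∧ condT b α m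
    · exfalso
      have hf1 : f1 b N α = Nat.find h := by simp only [f1, dif_pos h]
      obtain ⟨hlt, hc⟩ := Nat.find_spec h
      rcases hc with ⟨hpos, hnlt⟩ | hbt
      · apply hnlt
        have hlast : (List.ofFn fun i : Fin (f1 b N α) => α i).getLast? =
            some (α (f1 b N α - 1)) := by
          rw [List.getLast?_eq_getElem?]
          have hlen : (List.ofFn fun i : Fin (f1 b N α) => α i).length = f1 b N α := by
            simp
          rw [List.getElem?_eq_getElem (by rw [hlen]; omega)]
          simp [hf1, hpos]
        have := hP1 (α (f1 b N α - 1)) (by rw [hlast]; rfl)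
        rw [hf1] at this
        exact this
      · rw [hf1] at hb; exact hb hbt
    · push_neg at h
      have hall : ∀ m, m < N → ¬ condT b α m := fun m hm => h m hm
      have hmono : ∀ m, 0 < m → m < N → α (m-1) < α m := by
        intro m h0 hm
        by_contra hlt
        exact hall m hm (Or.inl ⟨h0, hlt⟩)
      have hbf : ∀ m, m < N → b (α m) = false := by
        intro m hm
        have := hall m hm
        simp [condT] at this
        exact this.2
      constructor
      · simp [gT, hb]
      · intro i hi
        have hgetD : ∀ j, j < N → (gT b N α).getD j 0 = α j := by
          intro j hj
          simp [gT, hb, List.getD, List.getElem?_ofFn, hj]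
        rw [hgetD i (by omega), hgetD (i+1) hi]
        refine ⟨by simpa using hmono (i+1) (by omega) hi, ?_⟩
        rw [hbf i (by omega), hbf (i+1) hi]


end
end

section
/- The one-step tape algorithm is a correct realizer: fix b : ℕ → {0,1}. The approximation algorithm A of sort ℕ*,ℕ,ℕ with registers {s,e_1,e_2} × ℕ, query states (s,x,□) and (e_1,x,□), end states (e_i,x,y), input ρ(u) = (s, u_{n−1}+1) (and ρ([]) = (s,0)), query ξ(c,x) = x, and transition (s,x,y) ▷ (e_1,y,□) if b_x = 1 ∧ x ≤ y ∧ b_y = 0, else (s,x,y) ▷ (e_2,x,y), terminates on all oracles f : ℕ → ℕ and satisfies P(u,x,y) :≡ u_{n−1} < x ∧ ((b_x = 1 ∧ x ≤ y) → b_y = 1). In particular, every run has length at most two oracle queries. -/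
section

/-- The register symbols `s`, `e₁`, `e₂` of the one-step tape algorithm. -/
inductive TSym : Type
  | s : TSym
  | e1 : TSym
  | e2 : TSym
  deriving DecidableEq

variable (b : ℕ → Bool)

/-- Query registers: those of the form `(s, x)` or `(e₁, x)`. -/
def QA : Set (TSym × ℕ) := {r | r.1 = TSym.s ∨ r.1 = TSym.e1}

/-- End states: `(e_i, x, y)`, with nonempty answer tape. -/
def EA : Set ((TSym × ℕ) × Option ℕ) :=
  {p | (p.1.1 = TSym.e1 ∨ p.1.1 = TSym.e2) ∧ p.2 ≠ none}

/-- Input map `ρ(u) = (s, u_{n−1}+1)`, with `ρ([]) = (s, 0)`. -/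
def ρA (u : List ℕ) : TSym × ℕ :=
  (TSym.s, match u.getLast? with | some l => l + 1 | none => 0)

/-- Transition: `(s,x,y) ▷ (e₁,y,□)` if `b x = 1 ∧ x ≤ y ∧ b y = 0`, else
`(s,x,y) ▷ (e₂,x,y)` (`true` stands for the bit `1`). -/
def stepA : (TSym × ℕ) × Option ℕ → Option ((TSym × ℕ) × Option ℕ)
  | ((TSym.s, x), some y) =>
      if b x = true ∧ x ≤ y ∧ b y = false then some ((TSym.e1, y), none)
      else some ((TSym.e2, x), some y)
  | _ => none

/-- Reachability on oracle `f`, counting the number of oracle queries made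
(query map `ξ (c, x) = x`). -/
inductive ReachesC (f : ℕ → ℕ) : ℕ → (TSym × ℕ) × Option ℕ → (TSym × ℕ) × Option ℕ → Prop
  | refl (s : (TSym × ℕ) × Option ℕ) : ReachesC f 0 s s
  | oracle {k : ℕ} {r : TSym × ℕ} {t : (TSym × ℕ) × Option ℕ} :
      (r, (none : Option ℕ)) ∉ EA → r ∈ QA →
      ReachesC f k (r, some (f r.2)) t → ReachesC f (k + 1) (r, none) t
  | step {k : ℕ} {s s' t : (TSym × ℕ) × Option ℕ} :
      s ∉ EA → (s.2 = none → s.1 ∉ QA) → stepA b s = some s' →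
      ReachesC f k s' t → ReachesC f k s t

/-- The one-step tape algorithm is a correct realizer: it terminates on all oracles
`f : ℕ → ℕ` with at most two oracle queries, and satisfies `P`. -/
theorem tape_algorithm_correct :
    ∀ (f : ℕ → ℕ) (u : List ℕ),
      (∃ (r : TSym × ℕ) (y k : ℕ), k ≤ 2 ∧ (r, some y) ∈ EA ∧
        ReachesC b f k (ρA u, none) (r, some y)) ∧
      (∀ (r : TSym × ℕ) (y k : ℕ),
        ReachesC b f k (ρA u, none) (r, some y) → (r, some y) ∈ EA →
        Pt b u r.2 y) := by
  intro f u
  set x0 : ℕ := (ρA u).2 with hx0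
  have hρ : ρA u = (TSym.s, x0) := by simp [ρA, hx0]
  have hlast : ∀ l ∈ u.getLast?, l < x0 := by
    intro l hl
    cases h : u.getLast? with
    | none => simp [h] at hl
    | some m =>
      have hx : x0 = m + 1 := by simp [hx0, ρA, h]
      simp [h] at hl; omega
  have hsnotE : ∀ x (o : Option ℕ), ((TSym.s, x), o) ∉ EA := by
    intro x o h; rcases h with ⟨h1 | h1, _⟩ <;> simp_all
  have hsQ : ∀ x : ℕ, (TSym.s, x) ∈ QA := by intro x; left; rfl
  have he1Q : ∀ x : ℕ, (TSym.e1, x) ∈ QA := by intro x; right; rfl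
  have he1notE : ∀ x : ℕ, ((TSym.e1, x), (none : Option ℕ)) ∉ EA := by
    intro x h; exact h.2 rfl
  have he1E : ∀ x y : ℕ, ((TSym.e1, x), some y) ∈ EA := by
    intro x y; exact ⟨Or.inl rfl, by simp⟩
  have he2E : ∀ x y : ℕ, ((TSym.e2, x), some y) ∈ EA := by
    intro x y; exact ⟨Or.inr rfl, by simp⟩
  constructor
  · -- termination
    by_cases hc : b x0 = true ∧ x0 ≤ f x0 ∧ b (f x0) = false
    · refine ⟨(TSym.e1, f x0), f (f x0), 2, le_rfl, he1E _ _, ?_⟩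
      rw [hρ]
      refine ReachesC.oracle (hsnotE _ _) (hsQ _) ?_
      refine ReachesC.step (s' := ((TSym.e1, f x0), none)) (hsnotE _ _) (by simp) (by simp [stepA, hc]) ?_
      exact ReachesC.oracle (he1notE _) (he1Q _) (ReachesC.refl _)
    · refine ⟨(TSym.e2, x0), f x0, 1, by norm_num, he2E _ _, ?_⟩
      rw [hρ]
      refine ReachesC.oracle (hsnotE _ _) (hsQ _) ?_
      refine ReachesC.step (s' := ((TSym.e2, x0), some (f x0))) (hsnotE _ _) (by simp) (by simp [stepA, hc]) ?_
      exact ReachesC.refl _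
  · -- correctness
    intro r y k h hE
    rw [hρ] at h
    cases h with
    | step hs1 hs2 hs3 h4 => exact (hs2 rfl (hsQ x0)).elim
    | oracle h1 h2 h3 =>
      cases h3 with
      | refl s => exact absurd hE (hsnotE _ _)
      | step hs1 hs2 hs3 h4 =>
        simp only [stepA] at hs3
        split_ifs at hs3 with hc
        · -- branch to e1
          cases hs3
          cases h4 with
          | step hs1' hs2' hs3' h8 => exact (hs2' rfl (he1Q _)).elim
          | oracle h5 h6 h7 =>
            cases h7 with
            | refl s =>
              refine ⟨fun l hl => lt_of_lt_of_le (hlast l hl) hc.2.1, ?_⟩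
              intro ⟨hb, _⟩
              exact absurd hb (by simp [hc.2.2])
            | step hs1' hs2' hs3' h8 =>
              exact absurd hs3' (by simp [stepA])
        · -- branch to e2
          cases hs3
          cases h4 with
          | refl s =>
            refine ⟨hlast, ?_⟩
            intro ⟨hb, hle⟩
            by_contra hby
            exact hc ⟨hb, hle, by simpa using hby⟩
          | step hs1' hs2' hs3' h8 =>
            exact absurd hs3' (by simp [stepA])

end
end
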